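/- If there exists a latin square of order n with pairwise disjoint subsquares of orders h₁, …, h_k (a realization of the partition h₁ + ⋯ + h_k = n), then there exists a latin cube of order n with pairwise disjoint subcubes of orders h₁, …, h_k. -/
import Mathlib


def IsLatinCube {n : ℕ} (C : Fin n → Fin n → Fin n → Fin n) : Prop :=
  (∀ i j, Function.Bijective fun k => C i j k) ∧
  (∀ i k, Function.Bijective fun j => C i j k) ∧
  (∀ j k, Function.Bijective fun i => C i j k)

/-- A system of pairwise disjoint subcubes of orders `h 0, …, h (k-1)`
inside a cube `C` of order `n`: for each `i` there are `h i` rows, columns,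
files and symbols such that the corresponding subarray is a latin cube on
those symbols, and distinct subcubes share no layers and no symbols. -/
structure SubcubeSystem {n : ℕ} (C : Fin n → Fin n → Fin n → Fin n)
    (k : ℕ) (h : Fin k → ℕ) where
  rows : (i : Fin k) → Fin (h i) ↪ Fin n
  cols : (i : Fin k) → Fin (h i) ↪ Fin n
  files : (i : Fin k) → Fin (h i) ↪ Fin n
  syms : (i : Fin k) → Fin (h i) ↪ Fin n
  sub : (i : Fin k) → Fin (h i) → Fin (h i) → Fin (h i) → Fin (h i)
  sub_latin : ∀ i, IsLatinCube (sub i)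
  entry : ∀ i x y z, C (rows i x) (cols i y) (files i z) = syms i (sub i x y z)
  rows_disj : ∀ i j, i ≠ j → Disjoint (Set.range ⇑(rows i)) (Set.range ⇑(rows j))
  cols_disj : ∀ i j, i ≠ j → Disjoint (Set.range ⇑(cols i)) (Set.range ⇑(cols j))
  files_disj : ∀ i j, i ≠ j → Disjoint (Set.range ⇑(files i)) (Set.range ⇑(files j))
  syms_disj : ∀ i j, i ≠ j → Disjoint (Set.range ⇑(syms i)) (Set.range ⇑(syms j))

/-- `HasLC k h`: there is a latin cube of order `∑ i, h i` with pairwise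
disjoint subcubes of orders `h 0, …, h (k-1)` (a 3-realization). -/
def HasLC (k : ℕ) (h : Fin k → ℕ) : Prop :=
  ∃ C : Fin (∑ i, h i) → Fin (∑ i, h i) → Fin (∑ i, h i) → Fin (∑ i, h i),
    IsLatinCube C ∧ Nonempty (SubcubeSystem C k h)

def IsLatinSquare {n : ℕ} (L : Fin n → Fin n → Fin n) : Prop :=
  (∀ i, Function.Bijective fun j => L i j) ∧
  (∀ j, Function.Bijective fun i => L i j)

/-- A system of pairwise disjoint subsquares of orders `h 0, …, h (k-1)`
inside a latin square `L` of order `n`. -/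
structure SubsquareSystem {n : ℕ} (L : Fin n → Fin n → Fin n)
    (k : ℕ) (h : Fin k → ℕ) where
  rows : (i : Fin k) → Fin (h i) ↪ Fin n
  cols : (i : Fin k) → Fin (h i) ↪ Fin n
  syms : (i : Fin k) → Fin (h i) ↪ Fin n
  sub : (i : Fin k) → Fin (h i) → Fin (h i) → Fin (h i)
  sub_latin : ∀ i, IsLatinSquare (sub i)
  entry : ∀ i x y, L (rows i x) (cols i y) = syms i (sub i x y)
  rows_disj : ∀ i j, i ≠ j → Disjoint (Set.range ⇑(rows i)) (Set.range ⇑(rows j))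
  cols_disj : ∀ i j, i ≠ j → Disjoint (Set.range ⇑(cols i)) (Set.range ⇑(cols j))
  syms_disj : ∀ i j, i ≠ j → Disjoint (Set.range ⇑(syms i)) (Set.range ⇑(syms j))

/-- `HasLS k h`: there is a latin square of order `∑ i, h i` with pairwise
disjoint subsquares of orders `h 0, …, h (k-1)` (a realization). -/
def HasLS (k : ℕ) (h : Fin k → ℕ) : Prop :=
  ∃ L : Fin (∑ i, h i) → Fin (∑ i, h i) → Fin (∑ i, h i),
    IsLatinSquare L ∧ Nonempty (SubsquareSystem L k h)

/-- a realization yields a 3-realization. -/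
theorem cube_realization_from_square_realization (k : ℕ) (h : Fin k → ℕ) :
    HasLS k h → HasLC k h := by
  rintro ⟨L, hL, ⟨S⟩⟩
  classical
  -- column equivalences of L
  let Mq : Fin (∑ i, h i) → (Fin (∑ i, h i) ≃ Fin (∑ i, h i)) :=
    fun y => Equiv.ofBijective _ (hL.2 y)
  let M : Fin (∑ i, h i) → Fin (∑ i, h i) → Fin (∑ i, h i) := fun s y => (Mq y).symm s
  have hM' : ∀ s y x, L x y = s → M s y = x := by
    intro s y x hx
    have := (Mq y).symm_apply_apply x
    rw [show Mq y x = L x y from rfl, hx] at this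
    exact this
  -- rows and cols partition `Fin n`
  have Rinj : Function.Injective (fun p : Σ i, Fin (h i) => S.rows p.1 p.2) := by
    rintro ⟨i, x⟩ ⟨j, y⟩ hxy
    by_cases hij : i = j
    · subst hij
      simpa using (S.rows i).injective hxy
    · exact ((Set.disjoint_left.mp (S.rows_disj i j hij)) ⟨x, rfl⟩ ⟨y, hxy.symm⟩).elim
  have Cinj : Function.Injective (fun p : Σ i, Fin (h i) => S.cols p.1 p.2) := by
    rintro ⟨i, x⟩ ⟨j, y⟩ hxy
    by_cases hij : i = j
    · subst hij
      simpa using (S.cols i).injective hxy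
    · exact ((Set.disjoint_left.mp (S.cols_disj i j hij)) ⟨x, rfl⟩ ⟨y, hxy.symm⟩).elim
  have hcard : Fintype.card (Σ i, Fin (h i)) = Fintype.card (Fin (∑ i, h i)) := by
    simp
  have Rbij : Function.Bijective (fun p : Σ i, Fin (h i) => S.rows p.1 p.2) :=
    (Fintype.bijective_iff_injective_and_card _).mpr ⟨Rinj, hcard⟩
  have Cbij : Function.Bijective (fun p : Σ i, Fin (h i) => S.cols p.1 p.2) :=
    (Fintype.bijective_iff_injective_and_card _).mpr ⟨Cinj, hcard⟩
  let Re := Equiv.ofBijective _ Rbij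
  let Ce := Equiv.ofBijective _ Cbij
  let g : Fin (∑ i, h i) ≃ Fin (∑ i, h i) := Re.symm.trans Ce
  have hg : ∀ i x, g (S.rows i x) = S.cols i x := by
    intro i x
    have h1 : Re.symm (S.rows i x) = ⟨i, x⟩ := Re.symm_apply_apply ⟨i, x⟩
    show Ce (Re.symm (S.rows i x)) = S.cols i x
    rw [h1]
    rfl
  -- inner column equivalences
  let mq : (i : Fin k) → Fin (h i) → (Fin (h i) ≃ Fin (h i)) :=
    fun i x => Equiv.ofBijective _ ((S.sub_latin i).2 x)
  let m : (i : Fin k) → Fin (h i) → Fin (h i) → Fin (h i) := fun i x z => (mq i x).symm z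
  have hm : ∀ i x z, S.sub i (m i x z) x = z := fun i x z => (mq i x).apply_symm_apply z
  have hminj : ∀ i z, Function.Injective fun x => m i x z := by
    intro i z x x' hxx
    have h1 : S.sub i (m i x z) x = z := hm i x z
    have h2 : S.sub i (m i x z) x' = z := by
      rw [show m i x z = m i x' z from hxx]; exact hm i x' z
    exact ((S.sub_latin i).1 (m i x z)).injective (h1.trans h2.symm)
  -- the auxiliary square N and the cube C
  let N : Fin (∑ i, h i) → Fin (∑ i, h i) → Fin (∑ i, h i) := fun r s => M s (g r)
  have hNapp : ∀ r s, L (N r s) (g r) = s := fun r s => (Mq (g r)).apply_symm_apply s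
  have hNinj : ∀ s, Function.Injective fun r => N r s := by
    intro s r r' hrr
    apply g.injective
    have h1 : L (N r s) (g r) = s := hNapp r s
    have h2 : L (N r s) (g r') = s := by
      rw [show N r s = N r' s from hrr]; exact hNapp r' s
    exact (hL.1 (N r s)).injective (h1.trans h2.symm)
  have hN : ∀ i x z, N (S.rows i x) (S.syms i z) = S.rows i (m i x z) := by
    intro i x z
    apply hM'
    rw [hg]
    calc L (S.rows i (m i x z)) (S.cols i x)
        = S.syms i (S.sub i (m i x z) x) := S.entry i _ x
      _ = S.syms i z := by rw [hm]
  let C : Fin (∑ i, h i) → Fin (∑ i, h i) → Fin (∑ i, h i) → Fin (∑ i, h i) :=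
    fun r c ℓ => L (N r ℓ) c
  refine ⟨C, ⟨?_, ?_, ?_⟩, ⟨{
      rows := S.rows, cols := S.cols, files := S.syms, syms := S.syms
      sub := fun i x y z => S.sub i (m i x z) y
      sub_latin := ?_
      entry := ?_
      rows_disj := S.rows_disj, cols_disj := S.cols_disj
      files_disj := S.syms_disj, syms_disj := S.syms_disj }⟩⟩
  · -- files of C
    intro r c
    exact (hL.2 c).comp (Mq (g r)).symm.bijective
  · -- columns of C
    intro r ℓ
    exact hL.1 (N r ℓ)
  · -- rows of C
    intro c ℓ
    rw [← Finite.injective_iff_bijective]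
    intro r r' hrr
    exact hNinj ℓ ((hL.2 c).injective hrr)
  · -- subcubes are latin
    intro i
    refine ⟨?_, ?_, ?_⟩
    · intro x y
      exact ((S.sub_latin i).2 y).comp (mq i x).symm.bijective
    · intro x z
      exact (S.sub_latin i).1 (m i x z)
    · intro y z
      rw [← Finite.injective_iff_bijective]
      intro x x' hxx
      exact hminj i z (((S.sub_latin i).2 y).injective hxx)
  · -- entries of the subcubes
    intro i x y z
    show L (N (S.rows i x) (S.syms i z)) (S.cols i y) = S.syms i (S.sub i (m i x z) y)
    rw [hN]
    exact S.entry i _ y
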